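/- Let t₁ and t₂ be real numbers with 0 < t₂ < t₁ < 1. Then there is no homeomorphism f : ℝ → ℝ such that f(t₁·x + (1−t₁)·y) = t₂·f(x) + (1−t₂)·f(y) for all x, y ∈ ℝ. That is, the Alexander quandles (ℝ, ∗_{t₁}) and (ℝ, ∗_{t₂}) are not isomorphic as topological quandles. -/

import Mathlib

/-!
Normalising by `f 0`, the relation `f (t x + (1 - t) y) = s f x + (1 - s) f y` with `t ≠ 0, 1`
makes `g = f - f 0` additive (write `u + v = t (u / t) + (1 - t) (v / (1 - t))`), and it gives
`g (t x) = s g x`. A continuous additive map on a real vector space is linear, so also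
`g (t x) = t g x`; for an injective `f` some `g x` is nonzero, hence `t = s`.
-/

def IsAlexanderQuandleHom {K E F : Type*} [Ring K] [AddCommGroup E] [Module K E]
    [AddCommGroup F] [Module K F] (t s : K) (f : E → F) : Prop :=
  ∀ x y, f (t • x + (1 - t) • y) = s • f x + (1 - s) • f y

namespace IsAlexanderQuandleHom

section Field

variable {K E F : Type*} [Field K] [AddCommGroup E] [Module K E] [AddCommGroup F] [Module K F]
  {t s : K} {f : E → F}

theorem sub_map_zero_smul (hf : IsAlexanderQuandleHom t s f) (x : E) :
    f (t • x) - f 0 = s • (f x - f 0) := by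
  have h := hf x 0
  rw [smul_zero, add_zero] at h
  rw [h]
  module

theorem sub_map_zero_add (hf : IsAlexanderQuandleHom t s f) (ht₀ : t ≠ 0) (ht₁ : t ≠ 1)
    (u v : E) : f (u + v) - f 0 = (f u - f 0) + (f v - f 0) := by
  have ht₁' : 1 - t ≠ 0 := sub_ne_zero.mpr ht₁.symm
  have hu := hf.sub_map_zero_smul (t⁻¹ • u)
  have hv := hf 0 ((1 - t)⁻¹ • v)
  have huv := hf (t⁻¹ • u) ((1 - t)⁻¹ • v)
  rw [smul_inv_smul₀ ht₀] at hu huv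
  rw [smul_inv_smul₀ ht₁'] at huv
  rw [smul_inv_smul₀ ht₁', smul_zero, zero_add] at hv
  rw [huv, hu, hv]
  module

def normalizedAddHom (hf : IsAlexanderQuandleHom t s f) (ht₀ : t ≠ 0) (ht₁ : t ≠ 1) : E →+ F :=
  AddMonoidHom.mk' (fun x => f x - f 0) (hf.sub_map_zero_add ht₀ ht₁)

end Field

variable {E F : Type*} [AddCommGroup E] [Module ℝ E] [TopologicalSpace E] [ContinuousSMul ℝ E]
  [Nontrivial E] [AddCommGroup F] [Module ℝ F] [TopologicalSpace F] [IsTopologicalAddGroup F]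
  [ContinuousSMul ℝ F] [T2Space F] {t s : ℝ} {f : E → F}

theorem eq_of_continuous_of_injective (hf : IsAlexanderQuandleHom t s f) (ht₀ : t ≠ 0)
    (ht₁ : t ≠ 1) (hcont : Continuous f) (hinj : Function.Injective f) : t = s := by
  set g := hf.normalizedAddHom ht₀ ht₁
  obtain ⟨x, hx⟩ := exists_ne (0 : E)
  have hgx : g x ≠ 0 := sub_ne_zero.mpr (hinj.ne hx)
  have hlin : g (t • x) = t • g x := map_real_smul g (hcont.sub continuous_const) t x
  have hscale : g (t • x) = s • g x := hf.sub_map_zero_smul x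
  have : (t - s) • g x = 0 := by rw [sub_smul, ← hlin, ← hscale, sub_self]
  exact sub_eq_zero.mp ((smul_eq_zero.mp this).resolve_right hgx)

end IsAlexanderQuandleHom

/-- Lemma 3.6: if `0 < t₂ < t₁ < 1`, the Alexander quandles `(ℝ, ∗_{t₁})` and
`(ℝ, ∗_{t₂})` are not isomorphic. -/
theorem alexander_quandles_R_not_isomorphic_of_lt_of_lt_one (t₁ t₂ : ℝ)
    (ht₂ : 0 < t₂) (ht : t₂ < t₁) (ht₁ : t₁ < 1) :
    ¬ ∃ f : ℝ ≃ₜ ℝ, ∀ x y : ℝ,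
      f (t₁ * x + (1 - t₁) * y) = t₂ * f x + (1 - t₂) * f y := by
  rintro ⟨f, hf⟩
  have hf' : IsAlexanderQuandleHom t₁ t₂ f := hf
  exact ht.ne' (hf'.eq_of_continuous_of_injective (by linarith) ht₁.ne f.continuous f.injective)
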